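/- Suppose 𝒮 is component maximal in 𝒳 with 𝒮-maximal subsets {𝒟_X}, and X, Y ∈ 𝒳 are such that for every S ∈ 𝒮 \ {𝒩}, the components of S are contained in the components of X if and only if they are contained in the components of Y. Then 𝒟_X = 𝒟_Y. -/

import Mathlib

open Classical

universe u

/-- A (finite) hypergraph over a vertex universe `V`: a finite vertex set together with a
finite set of nonempty hyperedges, each a subset of the vertex set. -/
structure Hypergraph' (V : Type u) where
  verts : Set V
  edges : Set (Set V)
  verts_finite : verts.Finite
  edges_finite : edges.Finite
  edge_sub : ∀ e ∈ edges, e ⊆ verts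
  edge_nonempty : ∀ e ∈ edges, e.Nonempty

namespace Hypergraph'

variable {V : Type u}

/-- The null hypergraph `𝒩`. -/
def Null : Hypergraph' V :=
  ⟨∅, ∅, Set.finite_empty, Set.finite_empty, by simp, by simp⟩

/-- Direct sum (hypergraph union) of two hypergraphs. -/
def dSum (X Y : Hypergraph' V) : Hypergraph' V where
  verts := X.verts ∪ Y.verts
  edges := X.edges ∪ Y.edges
  verts_finite := X.verts_finite.union Y.verts_finite
  edges_finite := X.edges_finite.union Y.edges_finite
  edge_sub := by
    rintro e (he | he)
    · exact (X.edge_sub e he).trans Set.subset_union_left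
    · exact (Y.edge_sub e he).trans Set.subset_union_right
  edge_nonempty := by
    rintro e (he | he)
    · exact X.edge_nonempty e he
    · exact Y.edge_nonempty e he

/-- Direct sum of a set of (pairwise disjoint) hypergraphs; the null hypergraph when the
unions fail to be finite.  The direct sum of the empty set is the null hypergraph. -/
noncomputable def bigSum (A : Set (Hypergraph' V)) : Hypergraph' V :=
  if h : (⋃ X ∈ A, X.verts).Finite ∧ (⋃ X ∈ A, X.edges).Finite then
    { verts := ⋃ X ∈ A, X.verts
      edges := ⋃ X ∈ A, X.edges
      verts_finite := h.1
      edges_finite := h.2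
      edge_sub := by
        intro e he
        simp only [Set.mem_iUnion] at he
        obtain ⟨X, hX, heX⟩ := he
        intro v hv
        simp only [Set.mem_iUnion]
        exact ⟨X, hX, X.edge_sub e heX hv⟩
      edge_nonempty := by
        intro e he
        simp only [Set.mem_iUnion] at he
        obtain ⟨X, hX, heX⟩ := he
        exact X.edge_nonempty e heX }
  else Null

/-- The direct difference `X ⊖ Z`: the unique hypergraph `W` vertex disjoint from `Z`
with `X = W ⊕ Z`, when it exists. -/
noncomputable def dDiff (X Z : Hypergraph' V) : Hypergraph' V :=
  if h : ∃ W : Hypergraph' V, Disjoint W.verts Z.verts ∧ X = dSum W Z then h.choose else X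

/-- Two vertices are connected in `X` if there is a walk between them. -/
def Connected (X : Hypergraph' V) (a b : V) : Prop :=
  a ∈ X.verts ∧ Relation.ReflTransGen (fun u w => ∃ e ∈ X.edges, u ∈ e ∧ w ∈ e) a b

/-- `C` is a connected component of `X`: its vertex set is a connectivity class of `X`
and its edges are the edges of `X` lying inside it. -/
def IsComponent (X C : Hypergraph' V) : Prop :=
  (∃ v ∈ X.verts, C.verts = {w | Connected X v w}) ∧
  C.edges = {e ∈ X.edges | e ⊆ C.verts}

/-- The set `𝒞(X)` of connected components of `X`. -/
def comps (X : Hypergraph' V) : Set (Hypergraph' V) := {C | IsComponent X C}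

/-- Component disjointness: `𝒞(X) ∩ 𝒞(Y) = ∅`. -/
def CompDisjoint (X Y : Hypergraph' V) : Prop := comps X ∩ comps Y = ∅

/-- `X ∧ H`: the union (direct sum) of the components of `X` meeting some hyperedge in `H`. -/
noncomputable def wedge (X : Hypergraph' V) (H : Set (Set V)) : Hypergraph' V :=
  bigSum {C ∈ comps X | ∃ f ∈ H, (f ∩ C.verts).Nonempty}

/-- `𝒮` is component maximal in `𝒳` with `𝒮`-maximal subsets given by `D`. -/
def IsMaximalSubsets (dom S : Set (Hypergraph' V))
    (D : Hypergraph' V → Set (Hypergraph' V)) : Prop :=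
  ∀ X ∈ dom,
    D X ⊆ S ∧
    (D X).Pairwise CompDisjoint ∧
    (Null ∈ S → Null ∈ D X) ∧
    (∀ T ∈ D X, comps T ⊆ comps X) ∧
    (∀ s ∈ S, comps s ⊆ comps X → ∃ T ∈ D X, comps s ⊆ comps T)

/-- `𝒮_X := { S ∈ 𝒟_X | V(π(S)) ∩ V(X ⊖ S) = ∅ }`. -/
noncomputable def SXof (π : Hypergraph' V → Hypergraph' V)
    (D : Hypergraph' V → Set (Hypergraph' V)) (X : Hypergraph' V) : Set (Hypergraph' V) :=
  {s ∈ D X | Disjoint (π s).verts (dDiff X s).verts}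

/-- `(𝒳, π, 𝒮)` (with `𝒮`-maximal subsets `D`) is a hypergraph transformation:
nonredundancy, component maximality, and preservation of the direct sum decomposition. -/
def IsHGT (dom : Set (Hypergraph' V)) (π : Hypergraph' V → Hypergraph' V)
    (S : Set (Hypergraph' V)) (D : Hypergraph' V → Set (Hypergraph' V)) : Prop :=
  (∀ s ∈ S, comps s ∩ comps (π s) = ∅) ∧
  (Null ∈ S → π Null ≠ Null) ∧
  IsMaximalSubsets dom S D ∧
  ∀ X ∈ dom,
    (π '' SXof π D X).Pairwise (fun A B => Disjoint A.verts B.verts) ∧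
    Set.InjOn π (SXof π D X) ∧
    π X = dSum (dDiff X (bigSum (SXof π D X))) (bigSum (π '' SXof π D X))

/-- `𝒮'` is upward closed with respect to `𝒮`. -/
def UpwardClosed (S' S : Set (Hypergraph' V)) : Prop :=
  ∀ s ∈ S', ∀ t ∈ S, comps s ⊆ comps t → t ∈ S'

end Hypergraph'

open Hypergraph'

/-! A hypergraph is the union of its components, so it is determined by them. Take a non-null
`T ∈ 𝒟_X`. Maximality puts its components inside those of some `T' ∈ 𝒟_Y`, and those of `T'`
inside those of some `T'' ∈ 𝒟_X`. Since the members of `𝒟_X` are pairwise component-disjoint,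
`T = T''`; so `T` and `T'` have the same components and are equal. -/

namespace Hypergraph'

variable {V : Type u}

theorem ext {X Y : Hypergraph' V} (hv : X.verts = Y.verts) (he : X.edges = Y.edges) :
    X = Y := by
  cases X; cases Y; simp_all

theorem Connected.mem_verts_right {X : Hypergraph' V} {a b : V} (h : Connected X a b) :
    b ∈ X.verts := by
  obtain ⟨ha, hab⟩ := h
  induction hab with
  | refl => exact ha
  | tail _ hstep _ =>
    obtain ⟨e, he, -, hbe⟩ := hstep
    exact X.edge_sub e he hbe

noncomputable def componentOf (X : Hypergraph' V) (v : V) : Hypergraph' V where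
  verts := {w | Connected X v w}
  edges := {e ∈ X.edges | e ⊆ {w | Connected X v w}}
  verts_finite := X.verts_finite.subset fun _ hw => hw.mem_verts_right
  edges_finite := X.edges_finite.subset fun _ he => he.1
  edge_sub := fun _ he => he.2
  edge_nonempty := fun e he => X.edge_nonempty e he.1

theorem componentOf_mem_comps {X : Hypergraph' V} {v : V} (hv : v ∈ X.verts) :
    componentOf X v ∈ comps X :=
  ⟨⟨v, hv, rfl⟩, rfl⟩

theorem verts_eq_biUnion_comps (X : Hypergraph' V) : X.verts = ⋃ C ∈ comps X, C.verts := by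
  refine Set.Subset.antisymm (fun v hv => ?_) (Set.iUnion₂_subset fun C hC => ?_)
  · exact Set.mem_biUnion (componentOf_mem_comps hv) ⟨hv, .refl⟩
  · obtain ⟨⟨v, -, hC⟩, -⟩ := hC
    rw [hC]
    exact fun _ hw => hw.mem_verts_right

theorem edges_eq_biUnion_comps (X : Hypergraph' V) : X.edges = ⋃ C ∈ comps X, C.edges := by
  refine Set.Subset.antisymm (fun e he => ?_) (Set.iUnion₂_subset fun C hC => ?_)
  · obtain ⟨v, hve⟩ := X.edge_nonempty e he
    have hv : v ∈ X.verts := X.edge_sub e he hve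
    exact Set.mem_biUnion (componentOf_mem_comps hv)
      ⟨he, fun w hw => ⟨hv, .single ⟨e, he, hve, hw⟩⟩⟩
  · rw [hC.2]
    exact fun _ he => he.1

theorem comps_injective : Function.Injective (comps : Hypergraph' V → _) := fun X Y h =>
  ext (by rw [verts_eq_biUnion_comps, verts_eq_biUnion_comps, h])
    (by rw [edges_eq_biUnion_comps, edges_eq_biUnion_comps, h])

theorem comps_null : comps (Null : Hypergraph' V) = ∅ :=
  Set.eq_empty_of_forall_notMem fun _ ⟨⟨_, hv, _⟩, _⟩ => hv

theorem comps_nonempty_iff {X : Hypergraph' V} : (comps X).Nonempty ↔ X ≠ Null := by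
  refine ⟨fun hX hnull => ?_, fun hX => ?_⟩
  · rw [hnull, comps_null] at hX
    exact hX.ne_empty rfl
  · contrapose! hX
    apply comps_injective
    rw [hX, comps_null]

namespace IsMaximalSubsets

variable {𝒳 S : Set (Hypergraph' V)} {D : Hypergraph' V → Set (Hypergraph' V)}
  {X Y : Hypergraph' V}

theorem eq_of_comps_subset (hD : IsMaximalSubsets 𝒳 S D) (hX : X ∈ 𝒳) {T T' : Hypergraph' V}
    (hT : T ∈ D X) (hT' : T' ∈ D X) (hTnull : T ≠ Null) (hTT' : comps T ⊆ comps T') :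
    T = T' := by
  by_contra hne
  obtain ⟨C, hC⟩ := comps_nonempty_iff.mpr hTnull
  have hdisj : comps T ∩ comps T' = ∅ := (hD X hX).2.1 hT hT' hne
  exact hdisj.subset ⟨hC, hTT' hC⟩

theorem subset_of_comps_subset_iff (hD : IsMaximalSubsets 𝒳 S D) (hX : X ∈ 𝒳) (hY : Y ∈ 𝒳)
    (h : ∀ s ∈ S, s ≠ Null → (comps s ⊆ comps X ↔ comps s ⊆ comps Y)) :
    D X ⊆ D Y := by
  obtain ⟨hDXS, -, -, hDXX, hmaxX⟩ := hD X hX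
  obtain ⟨hDYS, -, hnullY, hDYY, hmaxY⟩ := hD Y hY
  intro T hT
  by_cases hTnull : T = Null
  · exact hTnull ▸ hnullY (hTnull ▸ hDXS hT)
  obtain ⟨T', hT', hTT'⟩ := hmaxY T (hDXS hT) ((h T (hDXS hT) hTnull).mp (hDXX T hT))
  have hT'null : T' ≠ Null :=
    comps_nonempty_iff.mp ((comps_nonempty_iff.mpr hTnull).mono hTT')
  obtain ⟨T'', hT'', hT'T''⟩ :=
    hmaxX T' (hDYS hT') ((h T' (hDYS hT') hT'null).mpr (hDYY T' hT'))
  have hTT'' : T = T'' := hD.eq_of_comps_subset hX hT hT'' hTnull (hTT'.trans hT'T'')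
  subst hTT''
  rwa [comps_injective (hTT'.antisymm hT'T'')]

end IsMaximalSubsets

end Hypergraph'

theorem stmt6_general {V : Type u} (𝒳 S : Set (Hypergraph' V))
    (D : Hypergraph' V → Set (Hypergraph' V)) (hD : IsMaximalSubsets 𝒳 S D)
    (X Y : Hypergraph' V) (hX : X ∈ 𝒳) (hY : Y ∈ 𝒳)
    (h : ∀ s ∈ S, s ≠ Null → (comps s ⊆ comps X ↔ comps s ⊆ comps Y)) :
    D X = D Y :=
  (hD.subset_of_comps_subset_iff hX hY h).antisymm
    (hD.subset_of_comps_subset_iff hY hX fun s hs hnull => (h s hs hnull).symm)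

theorem stmt6 {V : Type u} (𝒳 S : Set (Hypergraph' V)) (hS : S ⊆ 𝒳)
    (D : Hypergraph' V → Set (Hypergraph' V)) (hD : IsMaximalSubsets 𝒳 S D)
    (X Y : Hypergraph' V) (hX : X ∈ 𝒳) (hY : Y ∈ 𝒳)
    (h : ∀ s ∈ S, s ≠ Null → (comps s ⊆ comps X ↔ comps s ⊆ comps Y)) :
    D X = D Y :=
  stmt6_general 𝒳 S D hD X Y hX hY h
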